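/- Let d_1, ..., d_n be i.i.d. Rademacher random variables, S ∈ ℝ^{n×n} with entries s_{i,j} of absolute value 1/√n and orthogonal rows, D = diag(d_1,...,d_n), and x, y ∈ ℝ^n. Then for any row index r, E[(SDx)_r² (SDy)_r²] = (1/n²)(‖x‖²‖y‖² + 2(x^T y)² − 2 ∑_{i=1}^n x_i² y_i²). -/

import Mathlib

/-!
Expanding both squares writes the integrand as `∑ a_i a_j b_k b_l d_i d_j d_k d_l` with
`a_i = s_{r,i} x_i`, `b_i = s_{r,i} y_i`. For independent centred signs, `E[d_i d_j d_k d_l]` is `1`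
when the indices pair up and `0` otherwise: an index occurring once splits off as an independent
centred factor, and a paired product is `d_p² d_q² = 1`. By inclusion–exclusion over the three
pairings (any two of which force all four indices to coincide) the sum is
`‖a‖²‖b‖² + 2⟪a, b⟫² - 2 ∑ a_i² b_i²`, and `s_{r,i}² = 1/n` gives the factor `1/n²`.
-/

open MeasureTheory ProbabilityTheory

/-- The Rademacher distribution: uniform on `{-1, 1} ⊆ ℝ`. -/
noncomputable def rademacherDist : Measure ℝ :=
  (1 / 2 : ENNReal) • Measure.dirac (1 : ℝ) + (1 / 2 : ENNReal) • Measure.dirac (-1 : ℝ)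

lemma ae_sq_eq_one_rademacherDist : ∀ᵐ t ∂rademacherDist, t ^ 2 = 1 := by
  simp [rademacherDist]

lemma integral_id_rademacherDist : ∫ t, t ∂rademacherDist = 0 := by
  rw [rademacherDist, integral_add_measure, integral_smul_measure, integral_smul_measure,
    integral_dirac, integral_dirac]
  · norm_num
  all_goals exact (integrable_dirac (by simp)).smul_measure (by simp)

section Pairing

variable {ι : Type*} [DecidableEq ι]

lemma ite_pairing_eq (i j k l : ι) :
    (if (i = j ∧ k = l) ∨ (i = k ∧ j = l) ∨ (i = l ∧ j = k) then 1 else 0 : ℝ) =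
      (if i = j ∧ k = l then 1 else 0) + (if i = k ∧ j = l then 1 else 0) +
        (if i = l ∧ j = k then 1 else 0) - 2 * if i = j ∧ i = k ∧ i = l then 1 else 0 := by
  split_ifs <;> grind

lemma sum_mul_ite_pairing [Fintype ι] (a b : ι → ℝ) :
    ∑ i, ∑ j, ∑ k, ∑ l, a i * a j * b k * b l *
        (if (i = j ∧ k = l) ∨ (i = k ∧ j = l) ∨ (i = l ∧ j = k) then 1 else 0) =
      (∑ i, a i ^ 2) * (∑ i, b i ^ 2) + 2 * (∑ i, a i * b i) ^ 2 - 2 * ∑ i, a i ^ 2 * b i ^ 2 := by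
  simp only [ite_pairing_eq, mul_add, mul_sub, Finset.sum_add_distrib, Finset.sum_sub_distrib,
    ite_and, mul_ite, mul_one, mul_zero, Finset.sum_ite_eq, Finset.mem_univ, if_true,
    Finset.sum_ite_irrel, Finset.sum_const_zero]
  have hsq_mul_sq : ∑ i, ∑ j, a i * a i * b j * b j = (∑ i, a i ^ 2) * ∑ i, b i ^ 2 := by
    rw [Finset.sum_mul_sum]; simp only [sq, mul_assoc]
  have hcross : ∑ i, ∑ j, a i * a j * b i * b j = (∑ i, a i * b i) ^ 2 := by
    rw [sq, Finset.sum_mul_sum]; simp only [mul_comm, mul_left_comm]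
  have hdiag : ∑ i, a i * a i * b i * b i * 2 = 2 * ∑ i, a i ^ 2 * b i ^ 2 := by
    rw [Finset.mul_sum]; exact Finset.sum_congr rfl fun i _ ↦ by ring
  have hswap : ∀ i j, a i * a j * b j * b i = a i * a j * b i * b j := fun i j ↦ by ring
  simp only [hswap]
  rw [hsq_mul_sq, hcross, hdiag]
  ring

end Pairing

lemma sq_sum_mul_sq_sum {ι : Type*} [Fintype ι] (a b x : ι → ℝ) :
    (∑ i, a i * x i) ^ 2 * (∑ i, b i * x i) ^ 2 =
      ∑ i, ∑ j, ∑ k, ∑ l, a i * a j * b k * b l * (x i * x j * x k * x l) := by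
  rw [sq, sq, Finset.sum_mul_sum, Finset.sum_mul_sum]
  simp_rw [Finset.sum_mul, Finset.mul_sum]
  simp only [mul_comm, mul_left_comm]

section SignFamily

variable {Ω ι : Type*} [MeasurableSpace Ω] {μ : Measure Ω} {d : ι → Ω → ℝ}

lemma integral_sq_sum_mul_sq_sum_eq_sum [Fintype ι]
    (hint : ∀ i j k l, Integrable (fun ω ↦ d i ω * d j ω * d k ω * d l ω) μ) (a b : ι → ℝ) :
    ∫ ω, (∑ i, a i * d i ω) ^ 2 * (∑ i, b i * d i ω) ^ 2 ∂μ =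
      ∑ i, ∑ j, ∑ k, ∑ l, a i * a j * b k * b l * ∫ ω, d i ω * d j ω * d k ω * d l ω ∂μ := by
  simp_rw [sq_sum_mul_sq_sum]
  simp (disch := intros; fun_prop) only [integral_finsetSum, integral_const_mul]

lemma integrable_mul_mul_mul [IsFiniteMeasure μ] (hmeas : ∀ i, AEMeasurable (d i) μ)
    (hsq : ∀ i, ∀ᵐ ω ∂μ, d i ω ^ 2 = 1) (i j k l : ι) :
    Integrable (fun ω ↦ d i ω * d j ω * d k ω * d l ω) μ := by
  refine .of_bound (by fun_prop) 1 ?_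
  filter_upwards [hsq i, hsq j, hsq k, hsq l] with ω hi hj hk hl
  rw [Real.norm_eq_abs, ← sq_le_one_iff_abs_le_one, mul_pow, mul_pow, mul_pow, hi, hj, hk, hl]
  norm_num

lemma integral_mul_eq_zero_of_ne (hmeas : ∀ i, AEMeasurable (d i) μ) (hindep : iIndepFun d μ)
    {i j k l : ι} (hmean : ∫ ω, d i ω ∂μ = 0) (hj : i ≠ j) (hk : i ≠ k) (hl : i ≠ l) :
    ∫ ω, d i ω * (d j ω * d k ω * d l ω) ∂μ = 0 := by
  classical
  have hind : IndepFun (d i) (fun ω ↦ d j ω * d k ω * d l ω) μ :=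
    (hindep.indepFun_finset₀ {i} {j, k, l} (by simp [hj, hk, hl]) hmeas).comp
      (φ := fun v : ({i} : Finset ι) → ℝ ↦ v ⟨i, by simp⟩)
      (ψ := fun v : ({j, k, l} : Finset ι) → ℝ ↦ v ⟨j, by simp⟩ * v ⟨k, by simp⟩ * v ⟨l, by simp⟩)
      (by fun_prop) (by fun_prop)
  rw [hind.integral_fun_mul_eq_mul_integral (hmeas i).aestronglyMeasurable (by fun_prop), hmean,
    zero_mul]

variable [IsProbabilityMeasure μ] (hmeas : ∀ i, AEMeasurable (d i) μ) (hindep : iIndepFun d μ)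
  (hsq : ∀ i, ∀ᵐ ω ∂μ, d i ω ^ 2 = 1) (hmean : ∀ i, ∫ ω, d i ω ∂μ = 0)
include hmeas hindep hsq hmean

lemma integral_mul_mul_mul [DecidableEq ι] (i j k l : ι) :
    ∫ ω, d i ω * d j ω * d k ω * d l ω ∂μ =
      if (i = j ∧ k = l) ∨ (i = k ∧ j = l) ∨ (i = l ∧ j = k) then 1 else 0 := by
  split_ifs with hpair
  · have hone : ∀ᵐ ω ∂μ, d i ω * d j ω * d k ω * d l ω = 1 := by
      filter_upwards [hsq i, hsq j, hsq k, hsq l] with ω hi hj hk hl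
      rcases hpair with ⟨rfl, rfl⟩ | ⟨rfl, rfl⟩ | ⟨rfl, rfl⟩ <;> grind
    simp [integral_congr_ae hone]
  · have hlonely : (i ≠ j ∧ i ≠ k ∧ i ≠ l) ∨ (j ≠ i ∧ j ≠ k ∧ j ≠ l) ∨
        (k ≠ i ∧ k ≠ j ∧ k ≠ l) ∨ (l ≠ i ∧ l ≠ j ∧ l ≠ k) := by
      grind
    rcases hlonely with ⟨h1, h2, h3⟩ | ⟨h1, h2, h3⟩ | ⟨h1, h2, h3⟩ | ⟨h1, h2, h3⟩
    all_goals
      rw [← integral_mul_eq_zero_of_ne hmeas hindep (hmean _) h1 h2 h3]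
      congr 1 with ω
      ring

lemma integral_sq_sum_mul_sq_sum [Fintype ι] (a b : ι → ℝ) :
    ∫ ω, (∑ i, a i * d i ω) ^ 2 * (∑ i, b i * d i ω) ^ 2 ∂μ =
      (∑ i, a i ^ 2) * (∑ i, b i ^ 2) + 2 * (∑ i, a i * b i) ^ 2 - 2 * ∑ i, a i ^ 2 * b i ^ 2 := by
  classical
  rw [integral_sq_sum_mul_sq_sum_eq_sum (integrable_mul_mul_mul hmeas hsq) a b]
  simp_rw [integral_mul_mul_mul hmeas hindep hsq hmean]
  exact sum_mul_ite_pairing a b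

end SignFamily

theorem SD_row_fourth_moment_general
    {Ω : Type*} [MeasurableSpace Ω] (μ : Measure Ω) [IsProbabilityMeasure μ]
    (n : ℕ)
    (S : Matrix (Fin n) (Fin n) ℝ)
    (hent : ∀ a b, |S a b| = 1 / Real.sqrt n)
    (d : Fin n → Ω → ℝ)
    (hmeas : ∀ i, Measurable (d i))
    (hindep : iIndepFun d μ)
    (hdist : ∀ i, Measure.map (d i) μ = rademacherDist)
    (x y : Fin n → ℝ) (r : Fin n) :
    ∫ ω, (∑ i, S r i * d i ω * x i) ^ 2 * (∑ i, S r i * d i ω * y i) ^ 2 ∂μ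
      = (1 / (n : ℝ) ^ 2) *
          ((∑ i, x i ^ 2) * (∑ i, y i ^ 2) + 2 * (∑ i, x i * y i) ^ 2
            - 2 * ∑ i, x i ^ 2 * y i ^ 2) := by
  have hmeas' i : AEMeasurable (d i) μ := (hmeas i).aemeasurable
  have hsq i : ∀ᵐ ω ∂μ, d i ω ^ 2 = 1 :=
    ae_of_ae_map (hmeas' i) ((hdist i).symm ▸ ae_sq_eq_one_rademacherDist)
  have hmean i : ∫ ω, d i ω ∂μ = 0 := by
    rw [← integral_id_rademacherDist, ← hdist i]
    exact (integral_map (hmeas' i) aestronglyMeasurable_id).symm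
  have hS i : S r i ^ 2 = 1 / n := by
    rw [← sq_abs, hent, div_pow, one_pow, Real.sq_sqrt n.cast_nonneg]
  simp_rw [mul_right_comm (S r _) (d _ _)]
  rw [integral_sq_sum_mul_sq_sum hmeas' hindep hsq hmean]
  simp only [mul_pow, mul_mul_mul_comm (S r _) (x _), mul_mul_mul_comm (S r _ ^ 2) (x _ ^ 2), ← sq]
  simp only [hS, ← Finset.mul_sum]
  ring

theorem SD_row_fourth_moment
    {Ω : Type*} [MeasurableSpace Ω] (μ : Measure Ω) [IsProbabilityMeasure μ]
    (n : ℕ) (hn : 0 < n)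
    (S : Matrix (Fin n) (Fin n) ℝ)
    (horth : S * S.transpose = 1)
    (hent : ∀ a b, |S a b| = 1 / Real.sqrt n)
    (d : Fin n → Ω → ℝ)
    (hmeas : ∀ i, Measurable (d i))
    (hindep : iIndepFun d μ)
    (hdist : ∀ i, Measure.map (d i) μ = rademacherDist)
    (x y : Fin n → ℝ) (r : Fin n) :
    ∫ ω, (∑ i, S r i * d i ω * x i) ^ 2 * (∑ i, S r i * d i ω * y i) ^ 2 ∂μ
      = (1 / (n : ℝ) ^ 2) *
          ((∑ i, x i ^ 2) * (∑ i, y i ^ 2) + 2 * (∑ i, x i * y i) ^ 2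
            - 2 * ∑ i, x i ^ 2 * y i ^ 2) :=
  SD_row_fourth_moment_general μ n S hent d hmeas hindep hdist x y r
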